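/- arXiv:2401.05289 — 4 statements merged into one kernel-verified Lean document; each statement's English description precedes it below -/
import Mathlib

section
/- Let G = N ⋊ P be the semidirect product of a finite p'-group N by a finite p-group P. Then for every x ∈ P, the number λ_G(x) of Sylow p-subgroups of G containing x equals the index |C_N(x) : C_N(P)|. -/
/-!
Let `P₀` be the image of `P`: a Sylow subgroup complementing the normal `p'`-subgroup `N`, so
every Sylow subgroup is `n P₀ n⁻¹` for some `n ∈ N`. For `n ∈ N` and `x ∈ P₀`, if `n⁻¹ x n ∈ P₀`
then the commutator `n⁻¹ x n x⁻¹` lies in `N ∩ P₀ = 1`; hence the Sylow subgroups containing `x`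
are exactly the conjugates of `P₀` by `C_N(x)`, and the stabiliser of `P₀` in `N` is `C_N(P₀)`.
The orbit–stabiliser theorem for `C_N(x)` acting on `P₀` now gives the count.
-/

open SemidirectProduct
open scoped commutatorElement

namespace Subgroup

variable {G : Type*} [Group G]

theorem Normal.commute_of_mul_mul_inv_mem {N H : Subgroup G} (hN : N.Normal)
    (hNH : Disjoint N H) {n h : G} (hn : n ∈ N) (hh : h ∈ H) (hconj : n * h * n⁻¹ ∈ H) :
    Commute n h := by
  have hcommH : ⁅n, h⁆ ∈ H := H.mul_mem hconj (H.inv_mem hh)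
  have hcommN : ⁅n, h⁆ ∈ N := commutator_le_left N H (commutator_mem_commutator hn hh)
  exact commutatorElement_eq_one_iff_commute.mp (disjoint_def.mp hNH hcommN hcommH)

end Subgroup

namespace Sylow

variable {G : Type*} [Group G] {p : ℕ} {N : Subgroup G} {P : Sylow p G}

theorem mem_smul_iff {g x : G} : x ∈ g • P ↔ g⁻¹ * x * g ∈ P := by
  rw [← SetLike.mem_coe, coe_smul]
  simp [Set.mem_smul_set_iff_inv_smul_mem, MulAut.smul_def]

theorem smul_eq_self_iff_mem_centralizer [hN : N.Normal] (hNP : Disjoint N P) {n : G}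
    (hn : n ∈ N) : n • P = P ↔ n ∈ Subgroup.centralizer (P : Set G) := by
  rw [smul_eq_iff_mem_normalizer]
  refine ⟨fun hnorm ↦ Subgroup.mem_centralizer_iff.mpr fun h hh ↦ ?_,
    fun hc ↦ Subgroup.centralizer_le_normalizer _ hc⟩
  exact (hN.commute_of_mul_mul_inv_mem hNP hn hh
    ((Subgroup.mem_normalizer_iff.mp hnorm h).mp hh)).symm

theorem mem_smul_iff_commute [hN : N.Normal] (hNP : Disjoint N P) {n x : G} (hn : n ∈ N)
    (hx : x ∈ P) : x ∈ n • P ↔ Commute n x := by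
  rw [mem_smul_iff]
  constructor
  · intro h
    exact Commute.inv_left_iff.mp
      (hN.commute_of_mul_mul_inv_mem hNP (N.inv_mem hn) hx (by rwa [inv_inv]))
  · intro h
    rwa [mul_assoc, ← h.eq, inv_mul_cancel_left]

theorem exists_mem_smul_eq [Fact p.Prime] [Finite (Sylow p G)] (hNP : N.IsComplement' P)
    (Q : Sylow p G) : ∃ n ∈ N, n • P = Q := by
  obtain ⟨g, rfl⟩ := MulAction.exists_smul_eq G P Q
  obtain ⟨⟨n, q⟩, rfl, -⟩ := hNP.existsUnique g
  refine ⟨n, n.2, ?_⟩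
  rw [mul_smul, smul_eq_iff_mem_normalizer.mpr (Subgroup.le_normalizer q.2)]

theorem card_mem_mul_card_inf_centralizer [Fact p.Prime] [Finite (Sylow p G)] [N.Normal]
    (hNP : N.IsComplement' P) {x : G} (hx : x ∈ P) :
    Nat.card {Q : Sylow p G // x ∈ Q} *
        Nat.card (N ⊓ Subgroup.centralizer (P : Set G) : Subgroup G) =
      Nat.card (N ⊓ Subgroup.centralizer {x} : Subgroup G) := by
  set A := N ⊓ Subgroup.centralizer {x}
  have horbit : MulAction.orbit A P = {Q | x ∈ Q} := by
    ext Q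
    constructor
    · rintro ⟨⟨a, haN, hax⟩, rfl⟩
      exact (mem_smul_iff_commute hNP.disjoint haN hx).mpr
        (Subgroup.mem_centralizer_singleton_iff.mp hax)
    · intro hQ
      obtain ⟨n, hn, rfl⟩ := exists_mem_smul_eq hNP Q
      exact ⟨⟨n, hn, Subgroup.mem_centralizer_singleton_iff.mpr
        ((mem_smul_iff_commute hNP.disjoint hn hx).mp hQ)⟩, rfl⟩
  have hstab : MulAction.stabilizer A P =
      (N ⊓ Subgroup.centralizer (P : Set G)).subgroupOf A := by
    ext ⟨a, haN, hax⟩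
    rw [MulAction.mem_stabilizer_iff, Subgroup.mem_subgroupOf, Subgroup.mem_inf]
    exact (smul_eq_self_iff_mem_centralizer hNP.disjoint haN).trans (and_iff_right haN).symm
  have hle : N ⊓ Subgroup.centralizer (P : Set G) ≤ A :=
    inf_le_inf_left _ (Subgroup.centralizer_le (Set.singleton_subset_iff.mpr hx))
  calc _ = Nat.card (MulAction.orbit A P) * Nat.card (MulAction.stabilizer A P) := by
        rw [horbit, hstab, Nat.card_congr (Subgroup.subgroupOfEquivOfLe hle).toEquiv]; rfl
    _ = Nat.card A := by
        rw [← Nat.card_prod]; exact Nat.card_congr (MulAction.orbitProdStabilizerEquivGroup A P)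

end Sylow

namespace SemidirectProduct

variable {N G : Type*} [Group N] [Group G] {φ : G →* MulAut N}

instance [Finite N] [Finite G] : Finite (N ⋊[φ] G) :=
  Finite.of_equiv _ equivProd.symm

instance normal_range_inl : (inl : N →* N ⋊[φ] G).range.Normal :=
  range_inl_eq_ker_rightHom (φ := φ) ▸ inferInstance

theorem isComplement'_range_inl_range_inr :
    (inl : N →* N ⋊[φ] G).range.IsComplement' inr.range := by
  refine Subgroup.isComplement'_of_disjoint_and_mul_eq_univ ?_ ?_
  · rw [Subgroup.disjoint_def]
    rintro _ ⟨n, rfl⟩ ⟨g, hg⟩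
    obtain rfl : n = 1 := by simpa using (congrArg left hg).symm
    exact map_one inl
  · exact Set.eq_univ_of_forall fun g ↦
      ⟨_, ⟨g.left, rfl⟩, _, ⟨g.right, rfl⟩, inl_left_mul_inr_right g⟩

theorem card_range_inl_inf_centralizer (s : Set (N ⋊[φ] G)) :
    Nat.card (inl.range ⊓ Subgroup.centralizer s : Subgroup (N ⋊[φ] G)) =
      Nat.card {n : N // ∀ g ∈ s, Commute (inl n) g} := by
  rw [← Subgroup.map_comap_eq]
  refine (Nat.card_congr (Subgroup.equivMapOfInjective _ _ inl_injective).toEquiv).symm.trans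
    (Nat.card_congr (Equiv.subtypeEquivRight fun n ↦ ?_))
  simp only [Subgroup.mem_comap, Subgroup.mem_centralizer_iff, commute_iff_eq, eq_comm]

def sylowRangeInr {p : ℕ} [Fact p.Prime] (hG : IsPGroup p G) (hN : (Nat.card N).Coprime p) :
    Sylow p (N ⋊[φ] G) :=
  (IsPGroup.of_surjective hG _ inr.rangeRestrict_surjective).toSylow (by
    rw [isComplement'_range_inl_range_inr.index_eq_card,
      ← Nat.card_congr (MonoidHom.ofInjective inl_injective).toEquiv]
    exact (Nat.Prime.coprime_iff_not_dvd Fact.out).mp hN.symm)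

end SemidirectProduct

/-- In `G = N ⋊ P` with `P` a finite `p`-group and `N` a finite `p'`-group, for every
`x ∈ P` the number of Sylow `p`-subgroups of `G` containing `x` equals the index
`|C_N(x) : C_N(P)|`; stated multiplicatively as `λ_G(x) · |C_N(P)| = |C_N(x)|`. -/
theorem lambda_eq_index_of_semidirect (p : ℕ) [Fact p.Prime] (N P : Type)
    [Group N] [Group P] [Fintype N] [Fintype P] (φ : P →* MulAut N)
    (hP : IsPGroup p P) (hN : Nat.Coprime (Nat.card N) p) (x : P) :
    Nat.card {Q : Sylow p (N ⋊[φ] P) // (inr x : N ⋊[φ] P) ∈ Q} *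
      Nat.card {n : N // ∀ y : P, Commute (inl n : N ⋊[φ] P) (inr y)} =
    Nat.card {n : N // Commute (inl n : N ⋊[φ] P) (inr x)} := by
  have key := Sylow.card_mem_mul_card_inf_centralizer (P := sylowRangeInr (φ := φ) hP hN)
    isComplement'_range_inl_range_inr (x := inr x) ⟨x, rfl⟩
  rw [card_range_inl_inf_centralizer, card_range_inl_inf_centralizer] at key
  simpa [sylowRangeInr] using key
end

section
/- Let H be a finite group, 𝒵 its set of cyclic subgroups, and f(Z) = ∑_{W ∈ 𝒵, Z ≤ W} μ(|W:Z|). Then |H| = ∑_{Z ∈ 𝒵} |Z|·f(Z). -/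
open scoped Classical

/-- `f(Z) = ∑_{W cyclic, Z ≤ W} μ(|W : Z|)`, the Möbius-type weight attached to a
cyclic subgroup `Z` of the finite group `H`. -/
noncomputable def moebiusWeight {H : Type*} [Group H] [Fintype H] (Z : Subgroup H) : ℤ :=
  ∑ W ∈ Finset.univ.filter (fun W : Subgroup H => IsCyclic W ∧ Z ≤ W),
    ArithmeticFunction.moebius (Nat.card W / Nat.card Z)

open Subgroup Finset


section Aux
variable {α : Type*} [Group α] [Fintype α]

/-- In a finite cyclic group, subgroups are determined by their cardinality. -/
lemma card_inj_of_isCyclic [IsCyclic α] {Z₁ Z₂ : Subgroup α}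
    (h : Nat.card Z₁ = Nat.card Z₂) : Z₁ = Z₂ := by
  have key : ∀ Z₁ Z₂ : Subgroup α, Nat.card Z₁ = Nat.card Z₂ → Z₁ ≤ Z₂ := by
    intro Z₁ Z₂ h
    set d := Nat.card Z₂ with hd
    have hd0 : 0 < d := Nat.card_pos
    have hsub : (Z₂ : Set α).toFinset ⊆ ({a : α | a ^ d = 1} : Finset α) := by
      intro z hz
      simp only [Set.mem_toFinset, SetLike.mem_coe] at hz
      simp only [mem_filter, mem_univ, true_and, Set.mem_setOf_eq]
      have : (⟨z, hz⟩ : Z₂) ^ d = 1 := by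
        rw [hd]; exact pow_card_eq_one'
      exact congrArg (Subtype.val) this
    have hcard : ({a : α | a ^ d = 1} : Finset α).card ≤ d :=
      IsCyclic.card_pow_eq_one_le hd0
    have hc2 : (Z₂ : Set α).toFinset.card = d := by
      rw [Set.toFinset_card, hd, Nat.card_eq_fintype_card]
      exact Fintype.card_congr (Equiv.refl _)
    have heq : (Z₂ : Set α).toFinset = ({a : α | a ^ d = 1} : Finset α) :=
      Finset.eq_of_subset_of_card_le hsub (by omega)
    intro z hz
    have : z ^ d = 1 := by
      have : (⟨z, hz⟩ : Z₁) ^ d = 1 := by rw [← h]; exact pow_card_eq_one'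
      exact congrArg Subtype.val this
    have : z ∈ ({a : α | a ^ d = 1} : Finset α) := by
      simp only [mem_filter, mem_univ, true_and, Set.mem_setOf_eq]; exact this
    rw [← heq] at this
    simpa using this
  exact le_antisymm (key _ _ h) (key _ _ h.symm)

/-- In a finite cyclic group, every divisor of the order is the cardinality of a subgroup. -/
lemma exists_subgroup_card_of_isCyclic [IsCyclic α] {d : ℕ} (hd : d ∣ Nat.card α) :
    ∃ Z : Subgroup α, Nat.card Z = d := by
  obtain ⟨g, hg⟩ := IsCyclic.exists_generator (α := α)
  have hog : orderOf g = Nat.card α := orderOf_eq_card_of_forall_mem_zpowers hg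
  set n := Nat.card α with hn
  have hn0 : n ≠ 0 := Nat.card_pos.ne'
  refine ⟨zpowers (g ^ (n / d)), ?_⟩
  rw [Nat.card_zpowers, orderOf_pow, hog, Nat.gcd_eq_right (Nat.div_dvd_of_dvd hd),
    Nat.div_div_self hd hn0]

end Aux

section Aux2
variable {α : Type*} [Group α] [Fintype α]

lemma le_iff_card_dvd_of_isCyclic [IsCyclic α] {Z₁ Z₂ : Subgroup α} :
    Z₁ ≤ Z₂ ↔ Nat.card Z₁ ∣ Nat.card Z₂ := by
  constructor
  · exact fun h => Subgroup.card_dvd_of_le h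
  · intro h
    obtain ⟨K, hK⟩ := exists_subgroup_card_of_isCyclic (α := Z₂) h
    have hmap : Nat.card (K.map Z₂.subtype) = Nat.card Z₁ := by
      rw [← hK]
      exact (Nat.card_congr (K.equivMapOfInjective Z₂.subtype Z₂.subtype_injective).toEquiv).symm
    have := card_inj_of_isCyclic (Z₁ := Z₁) (Z₂ := K.map Z₂.subtype) hmap.symm
    rw [this]
    exact Subgroup.map_subtype_le K

/-- Key Möbius counting lemma in a finite cyclic group. -/
lemma moebius_sum_cyclic [IsCyclic α] (x : α) :
    ∑ Z ∈ Finset.univ.filter (fun Z : Subgroup α => zpowers x ≤ Z),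
      ArithmeticFunction.moebius (Nat.card α / Nat.card Z)
    = if zpowers x = ⊤ then 1 else 0 := by
  set n := Nat.card α with hn
  have hn0 : n ≠ 0 := Nat.card_pos.ne'
  set c := Nat.card (zpowers x) with hc
  have hc0 : c ≠ 0 := Nat.card_pos.ne'
  have hcn : c ∣ n := Subgroup.card_subgroup_dvd_card _
  set m := n / c with hm
  have hm0 : m ≠ 0 := by
    simp only [hm]
    exact (Nat.div_ne_zero_iff_of_dvd hcn).mpr ⟨hn0, hc0⟩
  have key : ∑ Z ∈ Finset.univ.filter (fun Z : Subgroup α => zpowers x ≤ Z),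
      ArithmeticFunction.moebius (n / Nat.card Z)
      = ∑ k ∈ m.divisors, ArithmeticFunction.moebius (m / k) := by
    refine Finset.sum_nbij (fun Z => Nat.card Z / c) ?_ ?_ ?_ ?_
    · intro Z hZ
      simp only [mem_filter, mem_univ, true_and] at hZ
      have h1 : c ∣ Nat.card Z := Subgroup.card_dvd_of_le hZ
      have h2 : Nat.card Z ∣ n := Subgroup.card_subgroup_dvd_card _
      refine Nat.mem_divisors.mpr ⟨?_, hm0⟩
      obtain ⟨q, hq⟩ := h1
      obtain ⟨r, hr⟩ := h2
      refine ⟨r, ?_⟩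
      show m = Nat.card Z / c * r
      rw [hq, Nat.mul_div_cancel_left q (Nat.pos_of_ne_zero hc0), hm, hr, hq,
        mul_assoc, Nat.mul_div_cancel_left _ (Nat.pos_of_ne_zero hc0)]
    · intro Z₁ h₁ Z₂ h₂ heq
      beta_reduce at heq
      simp only [Set.mem_toFinset, coe_filter, Set.mem_setOf_eq, mem_univ, true_and] at h₁ h₂
      have d₁ : c ∣ Nat.card Z₁ := Subgroup.card_dvd_of_le h₁
      have d₂ : c ∣ Nat.card Z₂ := Subgroup.card_dvd_of_le h₂
      apply card_inj_of_isCyclic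
      rw [← Nat.div_mul_cancel d₁, ← Nat.div_mul_cancel d₂, heq]
    · intro k hk
      simp only [coe_filter, Set.mem_setOf_eq, mem_univ, true_and, Set.mem_image]
      rw [Finset.mem_coe, Nat.mem_divisors] at hk
      have hckn : c * k ∣ n := by
        obtain ⟨r, hr⟩ := hk.1
        exact ⟨r, by rw [hm] at hr; rw [mul_assoc, ← hr, Nat.mul_div_cancel' hcn]⟩
      obtain ⟨Z, hZ⟩ := exists_subgroup_card_of_isCyclic (α := α) hckn
      refine ⟨Z, ?_, ?_⟩
      · rw [le_iff_card_dvd_of_isCyclic, ← hc, hZ]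
        exact Dvd.intro k rfl
      · rw [hZ, Nat.mul_div_cancel_left k (Nat.pos_of_ne_zero hc0)]
    · intro Z hZ
      simp only [mem_filter, mem_univ, true_and] at hZ
      have h1 : c ∣ Nat.card Z := Subgroup.card_dvd_of_le hZ
      show _ = ArithmeticFunction.moebius (m / (Nat.card Z / c))
      congr 1
      obtain ⟨q, hq⟩ := h1
      rw [hq, Nat.mul_div_cancel_left q (Nat.pos_of_ne_zero hc0), hm,
        Nat.div_div_eq_div_mul, ← hq]
  rw [key, Nat.sum_div_divisors]
  have : ∑ k ∈ m.divisors, ArithmeticFunction.moebius k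
      = (ArithmeticFunction.moebius * ArithmeticFunction.zeta : ArithmeticFunction ℤ) m := by
    rw [ArithmeticFunction.coe_mul_zeta_apply]
  rw [this, ArithmeticFunction.moebius_mul_coe_zeta, ArithmeticFunction.one_apply]
  have hiff : m = 1 ↔ zpowers x = ⊤ := by
    rw [← Subgroup.card_eq_iff_eq_top (H := zpowers x), ← hc, ← hn]
    constructor
    · intro h
      have h2 : n = c * 1 := Nat.eq_mul_of_div_eq_right hcn (hm ▸ h)
      omega
    · intro h
      rw [hm, h, Nat.div_self (Nat.pos_of_ne_zero hn0)]
  simp only [hiff]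

end Aux2

section Transfer
variable {H : Type*} [Group H] [Fintype H]

lemma moebius_sum_subgroup {W : Subgroup H} (hW : IsCyclic W) (x : H) :
    ∑ Z ∈ Finset.univ.filter (fun Z : Subgroup H => x ∈ Z ∧ Z ≤ W),
      ArithmeticFunction.moebius (Nat.card W / Nat.card Z)
    = if zpowers x = W then 1 else 0 := by
  by_cases hx : x ∈ W
  · haveI := hW
    have key := moebius_sum_cyclic (α := W) ⟨x, hx⟩
    have hsum : ∑ Z ∈ Finset.univ.filter (fun Z : Subgroup H => x ∈ Z ∧ Z ≤ W),
        ArithmeticFunction.moebius (Nat.card W / Nat.card Z)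
        = ∑ Z' ∈ Finset.univ.filter (fun Z' : Subgroup W => zpowers (⟨x, hx⟩ : W) ≤ Z'),
          ArithmeticFunction.moebius (Nat.card W / Nat.card Z') := by
      refine Finset.sum_nbij' (fun Z => Z.subgroupOf W) (fun Z' => Z'.map W.subtype)
        ?_ ?_ ?_ ?_ ?_
      · intro Z hZ
        simp only [Finset.mem_filter, Finset.mem_univ, true_and] at hZ ⊢
        rw [zpowers_le, mem_subgroupOf]
        exact hZ.1
      · intro Z' hZ'
        simp only [Finset.mem_filter, Finset.mem_univ, true_and] at hZ' ⊢
        rw [zpowers_le] at hZ'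
        exact ⟨⟨⟨x, hx⟩, hZ', rfl⟩, Subgroup.map_subtype_le Z'⟩
      · intro Z hZ
        simp only [Finset.mem_filter, Finset.mem_univ, true_and] at hZ
        show Subgroup.map W.subtype (Z.subgroupOf W) = Z
        rw [Subgroup.subgroupOf_map_subtype, inf_eq_left.mpr hZ.2]
      · intro Z' hZ'
        exact Subgroup.comap_map_eq_self_of_injective W.subtype_injective Z'
      · intro Z hZ
        simp only [Finset.mem_filter, Finset.mem_univ, true_and] at hZ
        congr 2
        exact Nat.card_congr (Subgroup.subgroupOfEquivOfLe hZ.2).toEquiv.symm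
    rw [hsum, key]
    congr 1
    rw [eq_iff_iff]
    constructor
    · intro h
      have := congrArg (Subgroup.map W.subtype) h
      rw [MonoidHom.map_zpowers, ← MonoidHom.range_eq_map, W.range_subtype] at this
      exact this
    · intro h
      apply Subgroup.map_injective W.subtype_injective
      rw [MonoidHom.map_zpowers, ← MonoidHom.range_eq_map, W.range_subtype]
      exact h
  · rw [Finset.filter_false_of_mem, Finset.sum_empty, if_neg]
    · intro h; exact hx (h ▸ mem_zpowers x)
    · intro Z hZ h
      exact hx (h.2 h.1)
end Transfer

lemma zpowers_isCyclic' {H : Type*} [Group H] (x : H) : IsCyclic (zpowers x) := by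
  refine ⟨⟨⟨x, mem_zpowers x⟩, fun y => ?_⟩⟩
  obtain ⟨k, hk⟩ := y.2
  exact ⟨k, Subtype.ext (by rw [← hk]; rfl)⟩


/-- `|H| = ∑_{Z cyclic ≤ H} |Z|·f(Z)`. -/
theorem card_eq_sum_moebiusWeight (H : Type) [Group H] [Fintype H] :
    (Nat.card H : ℤ) =
    ∑ Z ∈ Finset.univ.filter (fun Z : Subgroup H => IsCyclic Z),
      (Nat.card Z : ℤ) * moebiusWeight Z := by
  have hcard : ∀ Z : Subgroup H, (Nat.card Z : ℤ) = ∑ x : H, if x ∈ Z then (1:ℤ) else 0 := by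
    intro Z
    rw [Finset.sum_boole, Nat.card_eq_fintype_card, Fintype.card_subtype]
  symm
  calc ∑ Z ∈ Finset.univ.filter (fun Z : Subgroup H => IsCyclic Z),
        (Nat.card Z : ℤ) * moebiusWeight Z
      = ∑ Z ∈ Finset.univ.filter (fun Z : Subgroup H => IsCyclic Z),
        ∑ W ∈ Finset.univ.filter (fun W : Subgroup H => IsCyclic W ∧ Z ≤ W),
        ∑ x : H, (if x ∈ Z then (1:ℤ) else 0) *
          ArithmeticFunction.moebius (Nat.card W / Nat.card Z) := by
        refine Finset.sum_congr rfl fun Z _ => ?_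
        rw [moebiusWeight, Finset.mul_sum]
        refine Finset.sum_congr rfl fun W _ => ?_
        rw [← Finset.sum_mul, ← hcard]
    _ = ∑ x : H, ∑ Z ∈ Finset.univ.filter (fun Z : Subgroup H => IsCyclic Z),
        ∑ W ∈ Finset.univ.filter (fun W : Subgroup H => IsCyclic W ∧ Z ≤ W),
        (if x ∈ Z then (1:ℤ) else 0) *
          ArithmeticFunction.moebius (Nat.card W / Nat.card Z) := by
        exact (Finset.sum_congr rfl fun Z _ => Finset.sum_comm).trans Finset.sum_comm
    _ = ∑ x : H, ∑ Z ∈ Finset.univ.filter (fun Z : Subgroup H => IsCyclic Z ∧ x ∈ Z),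
        ∑ W ∈ Finset.univ.filter (fun W : Subgroup H => IsCyclic W ∧ Z ≤ W),
        ArithmeticFunction.moebius (Nat.card W / Nat.card Z) := by
        refine Finset.sum_congr rfl fun x _ => ?_
        have step : ∀ Z ∈ Finset.univ.filter (fun Z : Subgroup H => IsCyclic Z),
            (∑ W ∈ Finset.univ.filter (fun W : Subgroup H => IsCyclic W ∧ Z ≤ W),
              (if x ∈ Z then (1:ℤ) else 0) *
                ArithmeticFunction.moebius (Nat.card W / Nat.card Z))
            = if x ∈ Z then
                (∑ W ∈ Finset.univ.filter (fun W : Subgroup H => IsCyclic W ∧ Z ≤ W),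
                  ArithmeticFunction.moebius (Nat.card W / Nat.card Z)) else 0 := by
          intro Z _
          split_ifs with h <;> simp
        rw [Finset.sum_congr rfl step, ← Finset.sum_filter, Finset.filter_filter]
    _ = ∑ x : H, ∑ W ∈ Finset.univ.filter (fun W : Subgroup H => IsCyclic W),
        ∑ Z ∈ Finset.univ.filter
          (fun Z : Subgroup H => x ∈ Z ∧ Z ≤ W),
        ArithmeticFunction.moebius (Nat.card W / Nat.card Z) := by
        refine Finset.sum_congr rfl fun x _ => ?_
        rw [Finset.sum_comm' (t' := Finset.univ.filter (fun W : Subgroup H => IsCyclic W))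
          (s' := fun W => Finset.univ.filter
            (fun Z : Subgroup H => (IsCyclic Z ∧ x ∈ Z) ∧ Z ≤ W))
          (fun Z W => by
            simp only [Finset.mem_filter, Finset.mem_univ, true_and]
            tauto)]
        refine Finset.sum_congr rfl fun W hW => ?_
        simp only [Finset.mem_filter, Finset.mem_univ, true_and] at hW
        congr 1
        refine Finset.filter_congr fun Z _ => ?_
        constructor
        · rintro ⟨⟨_, hxZ⟩, hZW⟩; exact ⟨hxZ, hZW⟩
        · rintro ⟨hxZ, hZW⟩
          exact ⟨⟨Subgroup.isCyclic_of_le hZW, hxZ⟩, hZW⟩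
    _ = ∑ x : H, ∑ W ∈ Finset.univ.filter (fun W : Subgroup H => IsCyclic W),
        (if zpowers x = W then (1:ℤ) else 0) := by
        refine Finset.sum_congr rfl fun x _ => Finset.sum_congr rfl fun W hW => ?_
        simp only [Finset.mem_filter, Finset.mem_univ, true_and] at hW
        exact moebius_sum_subgroup hW x
    _ = ∑ _x : H, (1:ℤ) := by
        refine Finset.sum_congr rfl fun x _ => ?_
        rw [Finset.sum_ite_eq]
        rw [if_pos]
        simp only [Finset.mem_filter, Finset.mem_univ, true_and]
        exact zpowers_isCyclic' x
    _ = (Nat.card H : ℤ) := by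
        simp [Nat.card_eq_fintype_card]
end

section
/- Let H be a finite group, 𝒵 its set of cyclic subgroups, f(Z) = ∑_{W ∈ 𝒵, Z ≤ W} μ(|W:Z|), and γ: H → ℚ_{>0} any function. Then ∏_{x ∈ H} γ(x) = ∏_{Z ∈ 𝒵} (∏_{z ∈ Z} γ(z))^{f(Z)} as an identity of positive rationals. -/
/-!
Comparing exponents of each `γ x`, the identity amounts to `∑_{Z cyclic, x ∈ Z} f(Z) = 1` for
every `x ∈ H`. Exchanging the two sums turns the left side into
`∑_{W cyclic, x ∈ W} ∑_{⟨x⟩ ≤ Z ≤ W} μ(|W : Z|)`. The subgroups of a finite cyclic group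
correspond to the divisors of its order, so the inner sum is `∑_{d ∣ |W : ⟨x⟩|} μ(d)`, which
vanishes unless `W = ⟨x⟩`.
-/

open scoped Classical

open Finset ArithmeticFunction
open scoped ArithmeticFunction.Moebius

namespace IsCyclic

variable {G : Type*} [Group G] [IsCyclic G]

theorem mem_of_pow_card_eq_one [Finite G] (B : Subgroup G) {x : G} (hx : x ^ Nat.card B = 1) :
    x ∈ B := by
  have := Fintype.ofFinite G
  have hB : (B : Set G) = ({a | a ^ Nat.card B = 1} : Finset G) := by
    refine Set.eq_of_subset_of_ncard_le (fun a ha => ?_) ?_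
    · simpa using orderOf_dvd_iff_pow_eq_one.mp (B.orderOf_dvd_natCard ha)
    · rw [Set.ncard_coe_finset, ← Nat.card_coe_set_eq]
      exact card_pow_eq_one_le Nat.card_pos
  rw [← SetLike.mem_coe, hB]
  simpa using hx

theorem le_of_card_dvd [Finite G] {A B : Subgroup G} (h : Nat.card A ∣ Nat.card B) : A ≤ B :=
  fun _ hx =>
    mem_of_pow_card_eq_one B (orderOf_dvd_iff_pow_eq_one.mp ((A.orderOf_dvd_natCard hx).trans h))

theorem eq_of_card_eq [Finite G] {A B : Subgroup G} (h : Nat.card A = Nat.card B) : A = B :=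
  (le_of_card_dvd h.dvd).antisymm (le_of_card_dvd h.symm.dvd)

theorem exists_subgroup_card_eq [Finite G] {d : ℕ} (hd : d ∣ Nat.card G) :
    ∃ A : Subgroup G, Nat.card A = d := by
  obtain ⟨g, hg⟩ := exists_ofOrder_eq_natCard (α := G)
  refine ⟨Subgroup.zpowers (g ^ (Nat.card G / d)), ?_⟩
  rw [Nat.card_zpowers, orderOf_pow_of_dvd, hg, Nat.div_div_self hd Nat.card_pos.ne']
  · exact (Nat.div_pos (Nat.le_of_dvd Nat.card_pos hd) (Nat.pos_of_dvd_of_pos hd Nat.card_pos)).ne'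
  · rw [hg]; exact Nat.div_dvd_of_dvd hd

theorem sum_moebius_card_div_card_of_le [Fintype G] (A : Subgroup G) :
    ∑ B ∈ univ.filter (A ≤ ·), μ (Nat.card G / Nat.card B) = if A = ⊤ then 1 else 0 := by
  have hG : Nat.card G ≠ 0 := Nat.card_pos.ne'
  have hA : Nat.card A ∣ Nat.card G := A.card_subgroup_dvd_card
  have hA_top : Nat.card G / Nat.card A = 1 ↔ A = ⊤ := by
    rw [← Subgroup.card_eq_iff_eq_top]
    exact ⟨fun h => Nat.eq_of_dvd_of_div_eq_one hA h, fun h => h ▸ Nat.div_self Nat.card_pos⟩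
  calc ∑ B ∈ univ.filter (A ≤ ·), μ (Nat.card G / Nat.card B)
      = ∑ d ∈ (Nat.card G / Nat.card A).divisors, μ d := by
        refine sum_nbij (fun B => Nat.card G / Nat.card B) (fun B hB => ?_)
          (fun B₁ _ B₂ _ h => ?_) (fun d hd => ?_) (fun _ _ => rfl)
        · exact Nat.mem_divisors.mpr ⟨Nat.div_dvd_div_left B.card_subgroup_dvd_card
            (Subgroup.card_dvd_of_le (mem_filter.mp hB).2),
            (Nat.div_pos (Nat.le_of_dvd Nat.card_pos hA) Nat.card_pos).ne'⟩
        · beta_reduce at h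
          refine eq_of_card_eq ?_
          rw [← Nat.div_div_self B₁.card_subgroup_dvd_card hG, h,
            Nat.div_div_self B₂.card_subgroup_dvd_card hG]
        · obtain ⟨hdA, -⟩ := Nat.mem_divisors.mp hd
          have hdG : d ∣ Nat.card G := hdA.trans (Nat.div_dvd_of_dvd hA)
          obtain ⟨B, hB⟩ := exists_subgroup_card_eq (Nat.div_dvd_of_dvd hdG)
          refine ⟨B, mem_filter.mpr ⟨mem_univ _, le_of_card_dvd ?_⟩, ?_⟩
          · rw [hB]
            exact Nat.dvd_div_of_mul_dvd (mul_comm (Nat.card A) d ▸ Nat.mul_dvd_of_dvd_div hA hdA)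
          · simp only [hB, Nat.div_div_self hdG hG]
    _ = if A = ⊤ then 1 else 0 := by
        rw [← coe_mul_zeta_apply, moebius_mul_coe_zeta, one_apply]
        simp only [hA_top]

end IsCyclic

theorem Subgroup.sum_moebius_card_div_card_Icc {H : Type*} [Group H] [Fintype H]
    {A W : Subgroup H} [IsCyclic W] (hAW : A ≤ W) :
    ∑ Z ∈ univ.filter (fun Z => A ≤ Z ∧ Z ≤ W), μ (Nat.card W / Nat.card Z) =
      if A = W then 1 else 0 := by
  have hA : (A.subgroupOf W).map W.subtype = A := map_subgroupOf_eq_of_le hAW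
  calc ∑ Z ∈ univ.filter (fun Z => A ≤ Z ∧ Z ≤ W), μ (Nat.card W / Nat.card Z)
      = ∑ B ∈ univ.filter (A.subgroupOf W ≤ ·), μ (Nat.card W / Nat.card B) := by
        refine (sum_nbij' (fun B => B.map W.subtype) (fun Z => Z.subgroupOf W) (fun B hB => ?_)
          (fun Z hZ => ?_) (fun B _ => ?_) (fun Z hZ => ?_) (fun B _ => ?_)).symm
        · exact mem_filter.mpr
            ⟨mem_univ _, hA ▸ map_mono (mem_filter.mp hB).2, map_subtype_le B⟩
        · exact mem_filter.mpr ⟨mem_univ _, subgroupOf_mono W (mem_filter.mp hZ).2.1⟩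
        · exact comap_map_eq_self_of_injective W.subtype_injective B
        · exact map_subgroupOf_eq_of_le (mem_filter.mp hZ).2.2
        · rw [card_map_of_injective W.subtype_injective]
    _ = if A = W then 1 else 0 := by
        rw [IsCyclic.sum_moebius_card_div_card_of_le, subgroupOf_eq_top]
        simp only [hAW.ge_iff_eq]

theorem sum_moebiusWeight_cyclic_mem {H : Type*} [Group H] [Fintype H] (x : H) :
    ∑ Z ∈ univ.filter (fun Z : Subgroup H => IsCyclic Z ∧ x ∈ Z), moebiusWeight Z = 1 := by
  calc ∑ Z ∈ univ.filter (fun Z : Subgroup H => IsCyclic Z ∧ x ∈ Z), moebiusWeight Z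
      = ∑ W ∈ univ.filter (fun W : Subgroup H => IsCyclic W ∧ x ∈ W),
          ∑ Z ∈ univ.filter (fun Z => Subgroup.zpowers x ≤ Z ∧ Z ≤ W),
            μ (Nat.card W / Nat.card Z) := by
        refine sum_comm' fun Z W => ?_
        simp only [mem_filter, mem_univ, true_and, Subgroup.zpowers_le]
        constructor
        · rintro ⟨⟨-, hx⟩, hW, hZW⟩
          exact ⟨⟨hx, hZW⟩, hW, hZW hx⟩
        · rintro ⟨⟨hx, hZW⟩, hW, -⟩
          exact ⟨⟨Subgroup.isCyclic_of_le hZW, hx⟩, hW, hZW⟩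
    _ = ∑ W ∈ univ.filter (fun W : Subgroup H => IsCyclic W ∧ x ∈ W),
          if Subgroup.zpowers x = W then 1 else 0 := by
        refine sum_congr rfl fun W hW => ?_
        obtain ⟨hW, hx⟩ := (mem_filter.mp hW).2
        exact Subgroup.sum_moebius_card_div_card_Icc (Subgroup.zpowers_le.mpr hx)
    _ = 1 := by
        rw [sum_ite_eq]
        simp [Subgroup.isCyclic_zpowers]

theorem Finset.prod_zpow_eq_zpow_sum {ι G : Type*} [CommGroup G] (s : Finset ι) (f : ι → ℤ)
    (a : G) : ∏ i ∈ s, a ^ f i = a ^ ∑ i ∈ s, f i := by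
  induction s using Finset.induction_on with
  | empty => simp
  | insert i s hi ih => rw [prod_insert hi, sum_insert hi, ih, zpow_add]

theorem Finset.prod_eq_prod_zpow_of_sum_eq_one {ι α G : Type*} [Fintype α] [CommGroup G]
    (s : Finset ι) (S : ι → Finset α) (w : ι → ℤ)
    (hw : ∀ a, ∑ i ∈ s with a ∈ S i, w i = 1) (γ : α → G) :
    ∏ a, γ a = ∏ i ∈ s, (∏ a ∈ S i, γ a) ^ w i := by
  calc ∏ a, γ a = ∏ a, ∏ i ∈ s with a ∈ S i, γ a ^ w i := by
        refine prod_congr rfl fun a _ => ?_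
        rw [prod_zpow_eq_zpow_sum, hw, zpow_one]
    _ = ∏ i ∈ s, ∏ a ∈ S i, γ a ^ w i := prod_comm' (by simp [and_comm])
    _ = ∏ i ∈ s, (∏ a ∈ S i, γ a) ^ w i := prod_congr rfl fun i _ => prod_zpow _ _ _

theorem prod_eq_prod_cyclic_zpow_moebiusWeight {H G : Type*} [Group H] [Fintype H]
    [CommGroup G] (γ : H → G) :
    ∏ x, γ x = ∏ Z ∈ univ.filter (fun Z : Subgroup H => IsCyclic Z),
      (∏ z : Z, γ z) ^ moebiusWeight Z := by
  rw [prod_eq_prod_zpow_of_sum_eq_one (univ.filter (fun Z : Subgroup H => IsCyclic Z))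
    (fun Z => univ.filter (· ∈ Z)) moebiusWeight fun x => by
      simpa only [filter_filter, mem_filter, mem_univ, true_and] using
        sum_moebiusWeight_cyclic_mem x]
  exact prod_congr rfl fun Z _ =>
    congrArg (· ^ moebiusWeight Z) (prod_subtype _ (fun _ => by simp) γ)

/-- For any positive-valued `γ : H → ℚ`,
`∏_{x ∈ H} γ(x) = ∏_{Z cyclic ≤ H} (∏_{z ∈ Z} γ(z))^{f(Z)}` in the positive rationals. -/
theorem prod_eq_prod_cyclic_moebiusWeight (H : Type) [Group H] [Fintype H]
    (γ : H → ℚ) (hγ : ∀ x, 0 < γ x) :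
    ∏ x : H, γ x =
    ∏ Z ∈ Finset.univ.filter (fun Z : Subgroup H => IsCyclic Z),
      (∏ z : Z, γ (z : H)) ^ moebiusWeight Z := by
  have h := congrArg Units.val
    (prod_eq_prod_cyclic_zpow_moebiusWeight fun x => Units.mk0 (γ x) (hγ x).ne')
  push_cast [Units.val_mk0] at h
  exact h
end

section
/- Let H be a finite group, 𝒵 its set of cyclic subgroups, and f(Z) = ∑_{W ∈ 𝒵, Z ≤ W} μ(|W:Z|). Then in the group algebra ℂ[H] (or ℤ[H]), ∑_{h ∈ H} h = ∑_{Z ∈ 𝒵} f(Z)·(∑_{z ∈ Z} z). -/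
open scoped Classical

/-! Comparing coefficients at `x`, the identity says `∑_{Z cyclic, x ∈ Z} f(Z) = 1`. Exchanging the
two sums turns the left side into `∑_{W cyclic, x ∈ W} ∑_{⟨x⟩ ≤ Z ≤ W} μ(|W| / |Z|)`. Subgroups of a
finite cyclic group are determined by their orders, so `Z ↦ |Z|` identifies the interval
`[⟨x⟩, W]` with the divisors of `|W|` that are multiples of `ord x`; the inner sum is then
`∑_{e ∣ |W| / ord x} μ(e)`, which vanishes unless `W = ⟨x⟩`. -/

open scoped ArithmeticFunction.Moebius

theorem ArithmeticFunction.sum_moebius_div_of_dvd {o n : ℕ} (hn : n ≠ 0) (ho : o ∣ n) :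
    ∑ d ∈ n.divisors with o ∣ d, μ (n / d) = if o = n then 1 else 0 := by
  obtain ⟨m, rfl⟩ := ho
  have ho0 : 0 < o := Nat.pos_of_ne_zero (left_ne_zero_of_mul hn)
  have hfilter : {d ∈ (o * m).divisors | o ∣ d} =
      m.divisors.map ⟨(o * ·), mul_right_injective₀ ho0.ne'⟩ := by
    ext d
    simp only [Finset.mem_filter, Nat.mem_divisors, Finset.mem_map, Function.Embedding.coeFn_mk]
    constructor
    · rintro ⟨⟨hd, -⟩, k, rfl⟩
      exact ⟨k, ⟨Nat.dvd_of_mul_dvd_mul_left ho0 hd, right_ne_zero_of_mul hn⟩, rfl⟩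
    · rintro ⟨k, ⟨hk, -⟩, rfl⟩
      exact ⟨⟨Nat.mul_dvd_mul_left o hk, hn⟩, dvd_mul_right o k⟩
  rw [hfilter, Finset.sum_map]
  simp only [Function.Embedding.coeFn_mk, Nat.mul_div_mul_left _ _ ho0]
  rw [Nat.sum_div_divisors m (fun k => μ k), ← coe_mul_zeta_apply, moebius_mul_coe_zeta,
    one_apply]
  simp [ho0.ne']

theorem IsCyclic.mem_subgroup_iff_pow_card_eq_one {G : Type*} [Group G] [Finite G] [IsCyclic G]
    (K : Subgroup G) (x : G) : x ∈ K ↔ x ^ Nat.card K = 1 := by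
  have hK (a : G) (ha : a ∈ K) : a ^ Nat.card K = 1 :=
    orderOf_dvd_iff_pow_eq_one.1 (K.orderOf_dvd_natCard ha)
  refine ⟨hK x, fun hx => ?_⟩
  have := Fintype.ofFinite G
  have hsub : (K : Set G).toFinset ⊆ ({a | a ^ Nat.card K = 1} : Finset G) := fun a ha => by
    simpa using hK a (Set.mem_toFinset.1 ha)
  have hcard : ({a | a ^ Nat.card K = 1} : Finset G).card ≤ (K : Set G).toFinset.card := by
    rw [Set.toFinset_card, ← Nat.card_eq_fintype_card]
    exact IsCyclic.card_pow_eq_one_le Nat.card_pos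
  rw [← SetLike.mem_coe, ← Set.mem_toFinset, Finset.eq_of_subset_of_card_le hsub hcard]
  simpa using hx

namespace Subgroup

variable {G : Type*} [Group G] {W Z Z₁ Z₂ : Subgroup G}

theorem mem_iff_pow_card_eq_one_of_le [Finite W] [IsCyclic W] (hZW : Z ≤ W) {x : G}
    (hx : x ∈ W) : x ∈ Z ↔ x ^ Nat.card Z = 1 := by
  have hcard : Nat.card (Z.subgroupOf W) = Nat.card Z :=
    Nat.card_congr (subgroupOfEquivOfLe hZW).toEquiv
  have key := IsCyclic.mem_subgroup_iff_pow_card_eq_one (Z.subgroupOf W) ⟨x, hx⟩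
  rw [mem_subgroupOf, hcard] at key
  simpa [Subtype.ext_iff] using key

theorem le_iff_card_dvd_of_le [Finite W] [IsCyclic W] (h₁ : Z₁ ≤ W) (h₂ : Z₂ ≤ W) :
    Z₁ ≤ Z₂ ↔ Nat.card Z₁ ∣ Nat.card Z₂ :=
  ⟨card_dvd_of_le, fun hdvd _ hx => (mem_iff_pow_card_eq_one_of_le h₂ (h₁ hx)).2 <|
    orderOf_dvd_iff_pow_eq_one.1 ((Z₁.orderOf_dvd_natCard hx).trans hdvd)⟩

theorem eq_of_le_of_card_eq [Finite W] [IsCyclic W] (h₁ : Z₁ ≤ W) (h₂ : Z₂ ≤ W)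
    (h : Nat.card Z₁ = Nat.card Z₂) : Z₁ = Z₂ :=
  le_antisymm ((le_iff_card_dvd_of_le h₁ h₂).2 h.dvd) ((le_iff_card_dvd_of_le h₂ h₁).2 h.symm.dvd)

theorem exists_le_card_eq_of_dvd [Finite W] [IsCyclic W] {d : ℕ} (hd : d ∣ Nat.card W) :
    ∃ Z ≤ W, Nat.card Z = d := by
  obtain ⟨w, rfl⟩ := W.isCyclic_iff_exists_zpowers_eq_top.1 ‹_›
  have hw : orderOf w ≠ 0 := Nat.card_zpowers w ▸ Nat.card_pos.ne'
  refine ⟨zpowers (w ^ (orderOf w / d)), zpowers_le.2 (pow_mem (mem_zpowers w) _), ?_⟩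
  rw [Nat.card_zpowers] at hd ⊢
  exact orderOf_pow_orderOf_div hw hd

variable [Fintype G]

theorem image_card_filter_zpowers_le_le [IsCyclic W] {h : G} (hh : h ∈ W) :
    Finset.image (fun Z : Subgroup G => Nat.card Z) {Z : Subgroup G | zpowers h ≤ Z ∧ Z ≤ W} =
      {d ∈ (Nat.card W).divisors | orderOf h ∣ d} := by
  ext d
  simp only [Finset.mem_image, Finset.mem_filter, Finset.mem_univ, true_and, Nat.mem_divisors]
  constructor
  · rintro ⟨Z, ⟨hhZ, hZW⟩, rfl⟩
    exact ⟨⟨card_dvd_of_le hZW, Nat.card_pos.ne'⟩, Nat.card_zpowers h ▸ card_dvd_of_le hhZ⟩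
  · rintro ⟨⟨hd, -⟩, hod⟩
    obtain ⟨Z, hZW, rfl⟩ := exists_le_card_eq_of_dvd hd
    have hhW : zpowers h ≤ W := zpowers_le.2 hh
    exact ⟨Z, ⟨(le_iff_card_dvd_of_le hhW hZW).2 (Nat.card_zpowers h ▸ hod), hZW⟩, rfl⟩

theorem sum_moebius_card_div_card_eq_ite [IsCyclic W] {h : G} (hh : h ∈ W) :
    ∑ Z with zpowers h ≤ Z ∧ Z ≤ W, μ (Nat.card W / Nat.card Z) =
      if zpowers h = W then 1 else 0 := by
  have hhW : zpowers h ≤ W := zpowers_le.2 hh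
  have hinj : Set.InjOn (fun Z : Subgroup G => Nat.card Z)
      ({Z | zpowers h ≤ Z ∧ Z ≤ W} : Finset (Subgroup G)) := fun Z₁ h₁ Z₂ h₂ hcard =>
    eq_of_le_of_card_eq (Finset.mem_filter.1 h₁).2.2 (Finset.mem_filter.1 h₂).2.2 hcard
  have hdvd : orderOf h ∣ Nat.card W := Nat.card_zpowers h ▸ card_dvd_of_le hhW
  rw [← Finset.sum_image (f := fun d => μ (Nat.card W / d)) hinj,
    image_card_filter_zpowers_le_le hh,
    ArithmeticFunction.sum_moebius_div_of_dvd Nat.card_pos.ne' hdvd, ← Nat.card_zpowers]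
  exact if_congr ⟨eq_of_le_of_card_eq hhW le_rfl, fun h => h ▸ rfl⟩ rfl rfl

end Subgroup

theorem sum_moebiusWeight_cyclic_mem_eq_one {G : Type*} [Group G] [Fintype G] (x : G) :
    ∑ Z ∈ Finset.univ.filter (fun Z : Subgroup G => IsCyclic Z ∧ x ∈ Z), moebiusWeight Z = 1 := by
  simp only [moebiusWeight]
  rw [Finset.sum_comm' (t' := {W : Subgroup G | IsCyclic W ∧ x ∈ W})
    (s' := fun W => {Z | Subgroup.zpowers x ≤ Z ∧ Z ≤ W})]
  · rw [Finset.sum_congr rfl fun W hW => by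
      obtain ⟨hW, hxW⟩ := (Finset.mem_filter.1 hW).2
      exact Subgroup.sum_moebius_card_div_card_eq_ite hxW]
    simp [Finset.sum_ite_eq, Subgroup.mem_zpowers, Subgroup.isCyclic_zpowers]
  · intro Z W
    simp only [Finset.mem_filter, Finset.mem_univ, true_and, Subgroup.zpowers_le]
    constructor
    · rintro ⟨⟨-, hxZ⟩, hW, hZW⟩
      exact ⟨⟨hxZ, hZW⟩, hW, hZW hxZ⟩
    · rintro ⟨⟨hxZ, hZW⟩, hW, -⟩
      exact ⟨⟨Subgroup.isCyclic_of_le hZW, hxZ⟩, hW, hZW⟩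

theorem MonoidAlgebra.coeff_sum_of_subtype {R M : Type*} [Semiring R] [Monoid M] (p : M → Prop)
    [Fintype {m // p m}] (x : M) :
    (∑ m : {m // p m}, of R M m).coeff x = if p x then 1 else 0 := by
  simp only [coeff_sum, Finsupp.finsetSum_apply, of_apply, coeff_single, Finsupp.single_apply]
  rw [Fintype.sum_ite_eq_ite_exists _ fun i j hi hj => Subtype.ext (hi.trans hj.symm)]
  simp

/-- In the group algebra `ℤ[H]`: `H⁺ = ∑_{Z cyclic ≤ H} f(Z)·Z⁺`, where
`S⁺ = ∑_{s ∈ S} s`. -/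
theorem sum_univ_eq_sum_cyclic (H : Type) [Group H] [Fintype H] :
    ∑ h : H, MonoidAlgebra.of ℤ H h =
    ∑ Z ∈ Finset.univ.filter (fun Z : Subgroup H => IsCyclic Z),
      moebiusWeight Z • ∑ z : Z, MonoidAlgebra.of ℤ H (z : H) := by
  ext x
  have hZ (Z : Subgroup H) : (∑ z : Z, MonoidAlgebra.of ℤ H z).coeff x = if x ∈ Z then 1 else 0 :=
    MonoidAlgebra.coeff_sum_of_subtype (· ∈ Z) x
  have hH : (∑ h : H, MonoidAlgebra.of ℤ H h).coeff x = 1 := by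
    simp [MonoidAlgebra.coeff_sum, Finsupp.single_apply]
  rw [hH, MonoidAlgebra.coeff_sum, Finsupp.finsetSum_apply]
  simp only [MonoidAlgebra.coeff_smul_apply, hZ, smul_eq_mul, mul_ite, mul_one, mul_zero]
  rw [← Finset.sum_filter, Finset.filter_filter, sum_moebiusWeight_cyclic_mem_eq_one]
end
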